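/- Let C_k ∈ 𝔖_k^{fix} be parametrized by (x_k, y_k, a_k, b_k) as in the fixed-point form with x_k + (k−1)a_k = 1 and y_k + a_k + (k−2)b_k = 0. If g_{S_k}(C_k) ≤ 9/8 for all k, then as k → ∞: y_k = O(1/k²), x_k = O(1/k), a_k = 1/k + O(1/k²), and b_k = −1/k² + O(1/k³). -/

import Mathlib

open Finset Filter

/-- Membership in the affine set 𝔖ₖ. -/
def inSk (k : ℕ) (C : Fin k → Matrix (Fin k) (Fin k) ℝ) : Prop :=
  ∀ ℓ : Fin k,
    (∀ i : Fin k, i ≠ ℓ → ∑ j, C ℓ i j = 0) ∧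
    (∀ j : Fin k, j ≠ ℓ → ∑ i, C ℓ i j = 0) ∧
    (∑ i, ∑ j, C ℓ i j = 1)

/-- A k-sample: nonempty subset of [k]×[k] with pairwise distinct second coordinates. -/
def IsSample {k : ℕ} (s : Finset (Fin k × Fin k)) : Prop :=
  s.Nonempty ∧ ∀ p ∈ s, ∀ q ∈ s, p ≠ q → p.2 ≠ q.2

/-- g_s^{(ℓ)}(C) -/
def gPart {k : ℕ} (s : Finset (Fin k × Fin k)) (C : Fin k → Matrix (Fin k) (Fin k) ℝ)
    (ℓ : Fin k) : ℝ :=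
  ∑ p ∈ s, C ℓ p.1 p.2

/-- g_s(C) -/
def gSample {k : ℕ} (s : Finset (Fin k × Fin k)) (C : Fin k → Matrix (Fin k) (Fin k) ℝ) : ℝ :=
  ∑ ℓ : Fin k, |gPart s C ℓ|

/-- g_{S_k}(C) : the maximum of g_s(C) over all k-samples s. -/
noncomputable def gMax (k : ℕ) (C : Fin k → Matrix (Fin k) (Fin k) ℝ) : ℝ :=
  ⨆ s : {s : Finset (Fin k × Fin k) // IsSample s}, gSample s.1 C

/-- multiplicity of ℓ in the multiset of coordinates of elements of s -/
def mult {k : ℕ} (s : Finset (Fin k × Fin k)) (ℓ : Fin k) : ℕ :=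
  (s.filter (fun p => p.1 = ℓ)).card + (s.filter (fun p => p.2 = ℓ)).card

/-- β(s): number of distinct indices among coordinates of s -/
def beta {k : ℕ} (s : Finset (Fin k × Fin k)) : ℕ :=
  (s.image Prod.fst ∪ s.image Prod.snd).card

/-- γ(s): number of diagonal elements of s -/
def gamma {k : ℕ} (s : Finset (Fin k × Fin k)) : ℕ :=
  (s.filter (fun p => p.1 = p.2)).card

/-- the strong homogeneous flow C*_k -/
noncomputable def Cstar (k : ℕ) : Fin k → Matrix (Fin k) (Fin k) ℝ :=
  fun ℓ i j =>
    if i = ℓ ∧ j = ℓ then 2/(k:ℝ) - 1/(k:ℝ)^2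
    else if i = ℓ ∨ j = ℓ then 1/(k:ℝ) - 1/(k:ℝ)^2
    else -1/(k:ℝ)^2

/-- the Sym(k)-invariant tuple with parameters x (i=j=ℓ), y (i=j≠ℓ),
a (exactly one of i,j equals ℓ), b (otherwise) -/
def Cfix (k : ℕ) (x y a b : ℝ) : Fin k → Matrix (Fin k) (Fin k) ℝ :=
  fun ℓ i j =>
    if i = ℓ ∧ j = ℓ then x
    else if i = j then y
    else if i = ℓ ∨ j = ℓ then a
    else b

/-- The Sym(k)-action on tuples of matrices. -/
def permAct {k : ℕ} (σ : Equiv.Perm (Fin k)) (C : Fin k → Matrix (Fin k) (Fin k) ℝ) :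
    Fin k → Matrix (Fin k) (Fin k) ℝ :=
  fun ℓ i j => C (σ⁻¹ ℓ) (σ⁻¹ i) (σ⁻¹ j)

/-- optimal value O_k -/
noncomputable def Ovalue (k : ℕ) : ℝ := sInf {y | ∃ C, inSk k C ∧ gMax k C = y}

/-! Testing `g_{S_k}` on the diagonal samples `{(i, i) : i ∈ t}` with `#t = m` gives
`m |x + (m - 1) y| + (k - m) m |y| ≤ 9/8`. Taking `m = ⌊k/2⌋` bounds `k² |y|`, and then `m = k`
bounds `k |x|`. The two linear constraints read `k (k - 1) (a - 1/k) = 1 - k x` and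
`k² (k - 2) (b + 1/k²) = -k² y - k² (a - 1/k) - 2`, which carry these bounds over to `a` and `b`. -/

open Asymptotics

section DiagonalSample

variable {k : ℕ}

theorem isSample_diag {t : Finset (Fin k)} (ht : t.Nonempty) : IsSample t.diag :=
  ⟨Finset.diag_nonempty.mpr ht, fun p hp q hq hpq => by
    simp only [Finset.mem_diag] at hp hq
    exact fun h => hpq (Prod.ext (by rw [hp.2, hq.2, h]) h)⟩

theorem gPart_diag_Cfix (t : Finset (Fin k)) (x y a b : ℝ) (ℓ : Fin k) :
    gPart t.diag (Cfix k x y a b) ℓ = if ℓ ∈ t then x + (#t - 1 : ℝ) * y else #t * y := by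
  have hdiag : ∀ i, Cfix k x y a b ℓ i i = (if i = ℓ then x - y else 0) + y := by
    intro i; by_cases h : i = ℓ <;> simp [Cfix, h]
  simp only [gPart, Finset.sum_diag, hdiag, Finset.sum_add_distrib, Finset.sum_ite_eq',
    Finset.sum_const, nsmul_eq_mul]
  split_ifs <;> ring

theorem gSample_diag_Cfix (t : Finset (Fin k)) (x y a b : ℝ) :
    gSample t.diag (Cfix k x y a b) = #t * |x + (#t - 1 : ℝ) * y| + (k - #t) * (#t * |y|) := by
  rw [gSample, ← Finset.sum_add_sum_compl t]
  have hcompl : ((#tᶜ : ℕ) : ℝ) = k - #t := by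
    rw [Finset.card_compl, Fintype.card_fin, Nat.cast_sub (by simpa using card_le_univ t)]
  have hin : ∑ ℓ ∈ t, |gPart t.diag (Cfix k x y a b) ℓ| = ∑ ℓ ∈ t, |x + (#t - 1 : ℝ) * y| :=
    Finset.sum_congr rfl fun ℓ hℓ => by rw [gPart_diag_Cfix, if_pos hℓ]
  have hout : ∑ ℓ ∈ tᶜ, |gPart t.diag (Cfix k x y a b) ℓ| = ∑ ℓ ∈ tᶜ, (#t * |y|) :=
    Finset.sum_congr rfl fun ℓ hℓ => by
      rw [gPart_diag_Cfix, if_neg (Finset.mem_compl.mp hℓ), abs_mul, Nat.abs_cast]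
  rw [hin, hout, Finset.sum_const, Finset.sum_const, nsmul_eq_mul, nsmul_eq_mul, hcompl]

theorem gSample_le_gMax {s : Finset (Fin k × Fin k)} (hs : IsSample s)
    (C : Fin k → Matrix (Fin k) (Fin k) ℝ) : gSample s C ≤ gMax k C :=
  le_ciSup (f := fun t : {s : Finset (Fin k × Fin k) // IsSample s} => gSample t.1 C)
    (Set.finite_range _).bddAbove ⟨s, hs⟩

theorem le_gMax_Cfix {m : ℕ} (hm : 1 ≤ m) (hmk : m ≤ k) (x y a b : ℝ) :
    m * |x + (m - 1 : ℝ) * y| + (k - m) * (m * |y|) ≤ gMax k (Cfix k x y a b) := by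
  obtain ⟨t, -, rfl⟩ := Finset.exists_subset_card_eq (s := (univ : Finset (Fin k)))
    (by simpa using hmk)
  rw [← gSample_diag_Cfix t x y a b]
  exact gSample_le_gMax (isSample_diag (Finset.card_pos.mp hm)) _

end DiagonalSample

section Bounds

variable {k : ℕ} {x y a b G : ℝ}

theorem sq_mul_abs_le_of_gMax_Cfix_le (hk : 2 ≤ k) (hG : gMax k (Cfix k x y a b) ≤ G) :
    (k : ℝ) ^ 2 * |y| ≤ 8 * G := by
  have hbound := (le_gMax_Cfix (m := k / 2) (by omega) (by omega) x y a b).trans hG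
  have hlow : (k : ℝ) ≤ 2 * (k / 2 : ℕ) + 1 := by
    exact_mod_cast (by omega : k ≤ 2 * (k / 2) + 1)
  have hhigh : 2 * ((k / 2 : ℕ) : ℝ) ≤ k := by
    exact_mod_cast (by omega : 2 * (k / 2) ≤ k)
  have hk' : (2 : ℝ) ≤ k := by exact_mod_cast hk
  have hprod : (k : ℝ) ^ 2 ≤ 8 * ((k - (k / 2 : ℕ)) * (k / 2 : ℕ)) := by
    nlinarith [mul_nonneg (sub_nonneg.mpr hlow) (sub_nonneg.mpr hhigh)]
  nlinarith [mul_le_mul_of_nonneg_right hprod (abs_nonneg y),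
    mul_nonneg (Nat.cast_nonneg (α := ℝ) (k / 2)) (abs_nonneg (x + ((k / 2 : ℕ) - 1 : ℝ) * y))]

theorem mul_abs_le_of_gMax_Cfix_le (hk : 2 ≤ k) (hG : gMax k (Cfix k x y a b) ≤ G) :
    (k : ℝ) * |x| ≤ 9 * G := by
  have hdiag : (k : ℝ) * |x + (k - 1 : ℝ) * y| ≤ G := by
    simpa using (le_gMax_Cfix (m := k) (by omega) le_rfl x y a b).trans hG
  have hy := sq_mul_abs_le_of_gMax_Cfix_le hk hG
  have hk' : (2 : ℝ) ≤ k := by exact_mod_cast hk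
  have htri : |x| ≤ |x + (k - 1 : ℝ) * y| + (k - 1) * |y| := by
    calc |x| = |(x + (k - 1 : ℝ) * y) - (k - 1 : ℝ) * y| := by ring_nf
      _ ≤ |x + (k - 1 : ℝ) * y| + |(k - 1 : ℝ) * y| := abs_sub _ _
      _ = |x + (k - 1 : ℝ) * y| + (k - 1) * |y| := by
        rw [abs_mul, abs_of_nonneg (by linarith : (0 : ℝ) ≤ k - 1)]
  nlinarith [mul_le_mul_of_nonneg_left htri (by linarith : (0 : ℝ) ≤ k), abs_nonneg y]

end Bounds

theorem sq_mul_abs_sub_inv_le {k x a : ℝ} (hk : 2 ≤ k) (h : x + (k - 1) * a = 1) :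
    k ^ 2 * |a - 1 / k| ≤ 2 * (1 + k * |x|) := by
  have hk0 : k ≠ 0 := by linarith
  have hid : k * (k - 1) * (a - 1 / k) = 1 - k * x := by
    field_simp
    linear_combination k * h
  have habs : k * (k - 1) * |a - 1 / k| ≤ 1 + k * |x| := by
    calc k * (k - 1) * |a - 1 / k| = |1 - k * x| := by
          rw [← hid, abs_mul, abs_of_nonneg (by nlinarith : 0 ≤ k * (k - 1))]
      _ ≤ |1| + |k * x| := abs_sub _ _
      _ = 1 + k * |x| := by rw [abs_one, abs_mul, abs_of_nonneg (by linarith)]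
  nlinarith [mul_nonneg (mul_nonneg (by linarith : 0 ≤ k) (sub_nonneg.mpr hk))
    (abs_nonneg (a - 1 / k))]

theorem cube_mul_abs_add_inv_sq_le {k y a b : ℝ} (hk : 3 ≤ k) (h : y + a + (k - 2) * b = 0) :
    k ^ 3 * |b + 1 / k ^ 2| ≤ 3 * (k ^ 2 * |y| + k ^ 2 * |a - 1 / k| + 2) := by
  have hk0 : k ≠ 0 := by linarith
  have hid : k ^ 2 * (k - 2) * (b + 1 / k ^ 2) = -(k ^ 2 * y) - k ^ 2 * (a - 1 / k) - 2 := by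
    field_simp
    linear_combination k ^ 2 * h
  have habs : k ^ 2 * (k - 2) * |b + 1 / k ^ 2| ≤ k ^ 2 * |y| + k ^ 2 * |a - 1 / k| + 2 := by
    calc k ^ 2 * (k - 2) * |b + 1 / k ^ 2| = |-(k ^ 2 * y) - k ^ 2 * (a - 1 / k) - 2| := by
          rw [← hid, abs_mul, abs_of_nonneg (by nlinarith : 0 ≤ k ^ 2 * (k - 2))]
      _ ≤ |-(k ^ 2 * y)| + |k ^ 2 * (a - 1 / k)| + |(2 : ℝ)| :=
        (abs_sub _ _).trans (add_le_add_left (abs_sub _ _) _)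
      _ = k ^ 2 * |y| + k ^ 2 * |a - 1 / k| + 2 := by
        rw [abs_neg, abs_mul, abs_mul, abs_of_nonneg (sq_nonneg k), abs_two]
  nlinarith [mul_nonneg (mul_nonneg (sq_nonneg k) (sub_nonneg.mpr hk))
    (abs_nonneg (b + 1 / k ^ 2))]

theorem isBigO_one_div_pow_of_pow_mul_abs_le {f : ℕ → ℝ} {n k₀ : ℕ} {C : ℝ}
    (h : ∀ k ≥ k₀, (k : ℝ) ^ n * |f k| ≤ C) : f =O[atTop] fun k => 1 / (k : ℝ) ^ n := by
  refine IsBigO.of_bound C ?_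
  filter_upwards [eventually_ge_atTop k₀, eventually_gt_atTop 0] with k hk hk0
  have hpos : (0 : ℝ) < (k : ℝ) ^ n := by positivity
  rw [Real.norm_eq_abs, Real.norm_eq_abs, abs_of_pos (one_div_pos.mpr hpos), mul_one_div,
    le_div_iff₀ hpos, mul_comm]
  exact h k hk

open Asymptotics in
theorem stmt9 (x y a b : ℕ → ℝ)
    (h1 : ∀ k : ℕ, x k + ((k:ℝ) - 1) * a k = 1)
    (h2 : ∀ k : ℕ, y k + a k + ((k:ℝ) - 2) * b k = 0)
    (hg : ∀ k : ℕ, gMax k (Cfix k (x k) (y k) (a k) (b k)) ≤ 9/8) :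
    y =O[atTop] (fun k : ℕ => 1/(k:ℝ)^2) ∧
    x =O[atTop] (fun k : ℕ => 1/(k:ℝ)) ∧
    (fun k : ℕ => a k - 1/(k:ℝ)) =O[atTop] (fun k : ℕ => 1/(k:ℝ)^2) ∧
    (fun k : ℕ => b k + 1/(k:ℝ)^2) =O[atTop] (fun k : ℕ => 1/(k:ℝ)^3) := by
  have hy (k : ℕ) (hk : k ≥ 2) : (k : ℝ) ^ 2 * |y k| ≤ 8 * (9 / 8) :=
    sq_mul_abs_le_of_gMax_Cfix_le hk (hg k)
  have hx (k : ℕ) (hk : k ≥ 2) : (k : ℝ) * |x k| ≤ 9 * (9 / 8) :=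
    mul_abs_le_of_gMax_Cfix_le hk (hg k)
  have ha (k : ℕ) (hk : k ≥ 2) : (k : ℝ) ^ 2 * |a k - 1 / k| ≤ 2 * (1 + 9 * (9 / 8)) := by
    have hk' : (2 : ℝ) ≤ k := by exact_mod_cast hk
    linarith [sq_mul_abs_sub_inv_le hk' (h1 k), hx k hk]
  have hb (k : ℕ) (hk : k ≥ 3) : (k : ℝ) ^ 3 * |b k + 1 / (k : ℝ) ^ 2|
      ≤ 3 * (8 * (9 / 8) + 2 * (1 + 9 * (9 / 8)) + 2) := by
    have hk' : (3 : ℝ) ≤ k := by exact_mod_cast hk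
    linarith [cube_mul_abs_add_inv_sq_le hk' (h2 k), hy k (by omega), ha k (by omega)]
  refine ⟨isBigO_one_div_pow_of_pow_mul_abs_le hy, ?_, isBigO_one_div_pow_of_pow_mul_abs_le ha,
    isBigO_one_div_pow_of_pow_mul_abs_le hb⟩
  simpa using isBigO_one_div_pow_of_pow_mul_abs_le (n := 1) (by simpa using hx)
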